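/- Let f : [0,∞) → ℝ be continuous with f(0) ≥ 0 and Skorokhod decomposition (a, x). Suppose for each ε > 0 we are given an approximate (β(ε), υ(ε)) decomposition (bᵉ, yᵉ) of f, with β(ε) → 0 and υ(ε) → 0 as ε → 0. Then bᵉ converges to a and yᵉ converges to x uniformly on every compact interval [0, T] as ε → 0. -/

import Mathlib

/-!
The Skorokhod compensator `a` is the smallest compensator of any admissible pair `(b, y)`: on a
maximal interval `(r, t]` where `b < a` one has `x > y ≥ 0`, so `a` is constant there, which
contradicts `a r ≤ b r`. Conversely, at the last time `r ≤ t` with `y r ≤ υ` (or `r = 0`) the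
compensator `b` is at most `υ + a r`, and on `(r, t]` it grows at rate at most `β`. Hence
`0 ≤ b t - a t ≤ |υ| + |β| t`, and the same holds for `y t - x t = b t - a t`.
-/

open Set Filter MeasureTheory

/-- An admissible pair `(b, y)` for a continuous `f : [0,∞) → ℝ` with `f 0 ≥ 0`:
`b` continuous nondecreasing, `y` continuous nonnegative, `y = b + f`, `y 0 = f 0`. -/
def AdmissiblePair (f b y : ℝ → ℝ) : Prop :=
  ContinuousOn b (Set.Ici 0) ∧ ContinuousOn y (Set.Ici 0) ∧
  MonotoneOn b (Set.Ici 0) ∧ (∀ t ∈ Set.Ici (0:ℝ), 0 ≤ y t) ∧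
  (∀ t ∈ Set.Ici (0:ℝ), y t = b t + f t) ∧ y 0 = f 0

/-- A Skorokhod decomposition `(a, x)` of `f`: an admissible pair with `a`
locally constant on `{t : x t > 0}`. -/
def SkorokhodDecomp (f a x : ℝ → ℝ) : Prop :=
  AdmissiblePair f a x ∧
  ∀ t ∈ Set.Ici (0:ℝ), 0 < x t → ∀ᶠ s in nhdsWithin t (Set.Ici 0), a s = a t

/-- An approximate `(β, υ)` decomposition of `f`: an admissible pair `(b, y)`
such that whenever `y ≥ υ` on `[s, u]`, `b u - b s ≤ β (u - s)`. -/
def ApproxDecomp (β υ : ℝ) (f b y : ℝ → ℝ) : Prop :=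
  AdmissiblePair f b y ∧
  ∀ s u : ℝ, 0 ≤ s → s ≤ u → (∀ t ∈ Set.Icc s u, υ ≤ y t) → b u - b s ≤ β * (u - s)

open Topology

lemma exists_last_mem_Icc {S : Set ℝ} (hS : IsClosed S) {s t : ℝ} (hs : s ∈ S) (hst : s ≤ t) :
    ∃ r ∈ Icc s t, r ∈ S ∧ ∀ u ∈ Ioc r t, u ∉ S := by
  obtain ⟨r, ⟨hrS, hr⟩, hmax⟩ :=
    (isCompact_Icc.inter_left hS).exists_isGreatest ⟨s, hs, le_rfl, hst⟩
  refine ⟨r, hr, hrS, fun u hu huS => ?_⟩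
  exact (hmax ⟨huS, hr.1.trans hu.1.le, hu.2⟩).not_gt hu.1

lemma eq_of_eventuallyConst_on_Ioo {g : ℝ → ℝ} {r t : ℝ} (hrt : r < t)
    (hg : ContinuousOn g (Icc r t)) (hloc : ∀ u ∈ Ioo r t, g =ᶠ[𝓝 u] fun _ => g u) :
    g t = g r := by
  obtain ⟨c, -, hc⟩ := exists_hasDerivAt_eq_slope g 0 hrt hg
    fun u hu => (hasDerivAt_const u (g u)).congr_of_eventuallyEq (hloc u hu)
  have := (div_eq_zero_iff.mp hc.symm).resolve_right (sub_ne_zero.mpr hrt.ne')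
  linarith

namespace AdmissiblePair

variable {f b y : ℝ → ℝ}

lemma map_zero (h : AdmissiblePair f b y) : b 0 = 0 := by
  have := h.2.2.2.2.1 0 self_mem_Ici
  linarith [h.2.2.2.2.2]

lemma map_nonneg (h : AdmissiblePair f b y) {t : ℝ} (ht : 0 ≤ t) : 0 ≤ b t :=
  h.map_zero ▸ h.2.2.1 self_mem_Ici ht ht

lemma dist_eq {a x : ℝ → ℝ} (hb : AdmissiblePair f b y) (ha : AdmissiblePair f a x)
    {t : ℝ} (ht : 0 ≤ t) : dist (x t) (y t) = dist (a t) (b t) := by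
  rw [ha.2.2.2.2.1 t ht, hb.2.2.2.2.1 t ht, dist_add_right]

end AdmissiblePair

lemma SkorokhodDecomp.le_of_admissiblePair {f a x b y : ℝ → ℝ} (hsk : SkorokhodDecomp f a x)
    (hb : AdmissiblePair f b y) {t : ℝ} (ht : 0 ≤ t) : a t ≤ b t := by
  obtain ⟨ha, hloc⟩ := hsk
  have h0 : a 0 ≤ b 0 := (ha.map_zero.trans hb.map_zero.symm).le
  obtain ⟨hbc, -, hbm, hy, hyb, -⟩ := hb
  by_contra! hlt
  have hS : IsClosed {u ∈ Icc 0 t | a u ≤ b u} :=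
    isClosed_Icc.isClosed_le (ha.1.mono Icc_subset_Ici_self) (hbc.mono Icc_subset_Ici_self)
  obtain ⟨r, ⟨hr0, hrt⟩, ⟨-, hr⟩, hlast⟩ :=
    exists_last_mem_Icc hS ⟨left_mem_Icc.mpr ht, h0⟩ ht
  have hrt : r < t := hrt.lt_of_ne fun h => (h ▸ hr).not_gt hlt
  have hconst : ∀ u ∈ Ioo r t, a =ᶠ[𝓝 u] fun _ => a u := by
    intro u ⟨hru, hut⟩
    have hu : 0 < u := hr0.trans_lt hru
    have hba : b u < a u :=
      not_le.mp fun h => hlast u ⟨hru, hut.le⟩ ⟨⟨hu.le, hut.le⟩, h⟩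
    have hx : 0 < x u := by
      linarith [ha.2.2.2.2.1 u hu.le, hyb u hu.le, hy u hu.le]
    have := hloc u hu.le hx
    rwa [nhdsWithin_eq_nhds.mpr (Ici_mem_nhds hu)] at this
  have har : a t = a r :=
    eq_of_eventuallyConst_on_Ioo hrt (ha.1.mono (Icc_subset_Ici_iff hrt.le |>.mpr hr0)) hconst
  linarith [hbm (mem_Ici.mpr hr0) (mem_Ici.mpr ht) hrt.le]

namespace ApproxDecomp

variable {β υ : ℝ} {f b y : ℝ → ℝ}

lemma sub_le_of_forall_Ioc (hap : ApproxDecomp β υ f b y) {s u : ℝ} (hs : 0 ≤ s)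
    (hsu : s ≤ u) (hy : ∀ t ∈ Ioc s u, υ ≤ y t) : b u - b s ≤ β * (u - s) := by
  rcases hsu.eq_or_lt with rfl | hsu
  · simp
  refine hap.2 s u hs hsu.le fun t ht => ?_
  have hcont : ContinuousOn y (Icc s u) := hap.1.2.1.mono (Icc_subset_Ici_iff hsu.le |>.mpr hs)
  exact ContinuousWithinAt.closure_le (closure_Ioc hsu.ne ▸ ht) continuousWithinAt_const
    ((hcont t ht).mono Ioc_subset_Icc_self) hy

lemma sub_le {a x : ℝ → ℝ} (hap : ApproxDecomp β υ f b y) (ha : AdmissiblePair f a x)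
    {t : ℝ} (ht : 0 ≤ t) : b t - a t ≤ |υ| + |β| * t := by
  have hS : IsClosed ({0} ∪ {u ∈ Icc 0 t | y u ≤ υ}) := isClosed_singleton.union
    (isClosed_Icc.isClosed_le (hap.1.2.1.mono Icc_subset_Ici_self) continuousOn_const)
  obtain ⟨r, ⟨hr0, hrt⟩, hrS, hlast⟩ := exists_last_mem_Icc hS (Or.inl rfl) ht
  have hy : ∀ u ∈ Ioc r t, υ ≤ y u := fun u hu =>
    le_of_not_ge fun h => hlast u hu (Or.inr ⟨⟨hr0.trans hu.1.le, hu.2⟩, h⟩)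
  have hbr : b r ≤ |υ| + a t := by
    have hat : 0 ≤ a t := ha.map_nonneg ht
    obtain ⟨-, -, ham, hx, hxa, -⟩ := ha
    rcases hrS with rfl | ⟨-, hyr⟩
    · linarith [hap.1.map_zero, abs_nonneg υ]
    · linarith [hap.1.2.2.2.2.1 r hr0, hxa r hr0, hx r hr0,
        ham (mem_Ici.mpr hr0) (mem_Ici.mpr ht) hrt, le_abs_self υ]
  have hβ : β * (t - r) ≤ |β| * t :=
    calc β * (t - r) ≤ |β| * (t - r) := by gcongr; exact le_abs_self β
      _ ≤ |β| * t := by gcongr; linarith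
  linarith [hap.sub_le_of_forall_Ioc hr0 hrt hy]

end ApproxDecomp

lemma SkorokhodDecomp.dist_le {β υ : ℝ} {f a x b y : ℝ → ℝ} (hsk : SkorokhodDecomp f a x)
    (hap : ApproxDecomp β υ f b y) {t : ℝ} (ht : 0 ≤ t) :
    dist (a t) (b t) ≤ |υ| + |β| * t := by
  rw [dist_comm, Real.dist_eq, abs_of_nonneg (sub_nonneg.mpr (hsk.le_of_admissiblePair hap.1 ht))]
  exact hap.sub_le hsk.1 ht

lemma tendstoUniformlyOn_of_dist_le {ι α β : Type*} [PseudoMetricSpace β] {l : Filter ι}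
    {F : ι → α → β} {g : α → β} {s : Set α} {e : ι → ℝ} (he : Tendsto e l (𝓝 0))
    (h : ∀ᶠ i in l, ∀ t ∈ s, dist (g t) (F i t) ≤ e i) : TendstoUniformlyOn F g l s :=
  Metric.tendstoUniformlyOn_iff.mpr fun δ hδ => by
    filter_upwards [h, he.eventually (gt_mem_nhds hδ)] with i hi hei t ht
    exact (hi t ht).trans_lt hei

theorem approx_skorokhod_conv_general (f a x : ℝ → ℝ)
    (hsk : SkorokhodDecomp f a x)
    (b y : ℝ → ℝ → ℝ) (β υ : ℝ → ℝ)
    (happ : ∀ ε > 0, ApproxDecomp (β ε) (υ ε) f (b ε) (y ε))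
    (hβ : Tendsto β (nhdsWithin 0 (Set.Ioi 0)) (nhds 0))
    (hυ : Tendsto υ (nhdsWithin 0 (Set.Ioi 0)) (nhds 0)) :
    ∀ T > 0,
      TendstoUniformlyOn b a (nhdsWithin 0 (Set.Ioi 0)) (Set.Icc 0 T) ∧
      TendstoUniformlyOn y x (nhdsWithin 0 (Set.Ioi 0)) (Set.Icc 0 T) := by
  intro T _
  have he : Tendsto (fun ε => |υ ε| + |β ε| * T) (𝓝[>] 0) (𝓝 0) := by
    simpa using hυ.abs.add (hβ.abs.mul_const T)
  have hpos : ∀ᶠ ε in 𝓝[>] (0 : ℝ), 0 < ε := self_mem_nhdsWithin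
  have hbound :
      ∀ᶠ ε in 𝓝[>] 0, ∀ t ∈ Icc 0 T, dist (a t) (b ε t) ≤ |υ ε| + |β ε| * T := by
    filter_upwards [hpos] with ε hε t ht
    calc dist (a t) (b ε t) ≤ |υ ε| + |β ε| * t := hsk.dist_le (happ ε hε) ht.1
      _ ≤ |υ ε| + |β ε| * T := by gcongr; exact ht.2
  refine ⟨tendstoUniformlyOn_of_dist_le he hbound, tendstoUniformlyOn_of_dist_le he ?_⟩
  filter_upwards [hbound, hpos] with ε hε hε₀ t ht
  rw [(happ ε hε₀).1.dist_eq hsk.1 ht.1]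
  exact hε t ht

/-- approximate `(β ε, υ ε)` decompositions with `β ε → 0`, `υ ε → 0`
converge uniformly on compact intervals to the Skorokhod decomposition. -/
theorem approx_skorokhod_conv (f a x : ℝ → ℝ)
    (hf : ContinuousOn f (Set.Ici 0)) (hf0 : 0 ≤ f 0)
    (hsk : SkorokhodDecomp f a x)
    (b y : ℝ → ℝ → ℝ) (β υ : ℝ → ℝ)
    (happ : ∀ ε > 0, ApproxDecomp (β ε) (υ ε) f (b ε) (y ε))
    (hβ : Tendsto β (nhdsWithin 0 (Set.Ioi 0)) (nhds 0))
    (hυ : Tendsto υ (nhdsWithin 0 (Set.Ioi 0)) (nhds 0)) :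
    ∀ T > 0,
      TendstoUniformlyOn b a (nhdsWithin 0 (Set.Ioi 0)) (Set.Icc 0 T) ∧
      TendstoUniformlyOn y x (nhdsWithin 0 (Set.Ioi 0)) (Set.Icc 0 T) :=
  approx_skorokhod_conv_general f a x hsk b y β υ happ hβ hυ
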